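/- Under the same hypotheses, the germ G_A is maximal: if (k_L,k_R) ∈ ℝ² satisfies H_L(k_L)=H_R(k_R) (with k_L ∈ [a_L,c_L], k_R ∈ [a_R,c_R]) and the dissipation inequality sgn(k_L−k̂_L)(H_L(k_L)−H_L(k̂_L)) ≥ sgn(k_R−k̂_R)(H_R(k_R)−H_R(k̂_R)) holds for every (k̂_L,k̂_R) ∈ G_A, then (k_L,k_R) ∈ G_A. -/

import Mathlib

/-!
Let `p ≤ b_L` and `q ≥ b_R`, `q' ≤ b_R` be the points where `H_L`, `H_R` take the value `A`;
both `(p, q)` and `(p, q')` lie in `G_A`. For a pair `k` with common flux value `v`, membership in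
`G_A` means `A ≤ v`, with equality when `k_L < b_L < b_R < k_R`. If `v < A`, then `p < k_L` and
`k_R < q`, so the dissipation inequality against `(p, q)` reads `A - v ≤ v - A`. If `v > A` with
`k_L < b_L`, `b_R < k_R`, then `k_L < p` and `q' < k_R`, and the inequality against `(p, q')`
reads `v - A ≤ A - v`.
-/

open Set

theorem StrictAntiOn.lt_of_apply_lt_of_mem_Icc {α β : Type*} [LinearOrder α] [Preorder β]
    {f : α → β} {a b p x : α} (hf : StrictAntiOn f (Icc a b)) (hp : p ∈ Icc a b) (hx : a ≤ x)
    (h : f x < f p) : p < x := by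
  by_contra! hxp
  exact h.not_ge (hf.antitoneOn ⟨hx, hxp.trans hp.2⟩ hp hxp)

theorem StrictMonoOn.lt_of_apply_lt_of_mem_Icc {α β : Type*} [LinearOrder α] [Preorder β]
    {f : α → β} {a b p x : α} (hf : StrictMonoOn f (Icc a b)) (hp : p ∈ Icc a b) (hx : x ≤ b)
    (h : f x < f p) : x < p := by
  by_contra! hpx
  exact h.not_ge (hf.monotoneOn hp ⟨hp.1.trans hpx, hx⟩ hpx)

def germ (HL HR : ℝ → ℝ) (aL bL cL aR bR cR A : ℝ) : Set (ℝ × ℝ) :=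
  {k | k.1 ∈ Icc aL cL ∧ k.2 ∈ Icc aR cR ∧ HR k.2 = HL k.1 ∧
    HL k.1 = max (max A (HL (max k.1 bL))) (HR (min k.2 bR))}

section Germ

variable {HL HR : ℝ → ℝ} {aL bL cL aR bR cR A : ℝ}

theorem mem_germ_iff (hL : HL bL ≤ A) (hR : HR bR ≤ A) {k : ℝ × ℝ} :
    k ∈ germ HL HR aL bL cL aR bR cR A ↔
      k.1 ∈ Icc aL cL ∧ k.2 ∈ Icc aR cR ∧ HR k.2 = HL k.1 ∧
        A ≤ HL k.1 ∧ (k.1 < bL → bR < k.2 → HL k.1 ≤ A) := by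
  refine and_congr_right fun _ => and_congr_right fun _ => and_congr_right fun hRH => ?_
  rcases le_total bL k.1 with h1 | h1 <;> rcases le_total k.2 bR with h2 | h2 <;>
    simp only [max_eq_left, max_eq_right, min_eq_left, min_eq_right, h1, h2] <;> grind

theorem mk_mem_germ_of_apply_eq (hL : HL bL ≤ A) (hR : HR bR ≤ A) {p q : ℝ} (hp : p ∈ Icc aL cL)
    (hq : q ∈ Icc aR cR) (hpA : HL p = A) (hqA : HR q = A) :
    (p, q) ∈ germ HL HR aL bL cL aR bR cR A :=
  (mem_germ_iff hL hR).2 ⟨hp, hq, hqA.trans hpA.symm, hpA.ge, fun _ _ => hpA.le⟩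

end Germ

theorem germ_maximal_general
    (aL bL cL aR bR cR A : ℝ)
    (HL HR : ℝ → ℝ)
    (haL : aL < bL) (hbL : bL < cL) (haR : aR < bR) (hbR : bR < cR)
    (hCL : ContDiffOn ℝ 2 HL (Icc aL cL)) (hCR : ContDiffOn ℝ 2 HR (Icc aR cR))
    (hdecL : StrictAntiOn HL (Icc aL bL))
    (hincR : StrictMonoOn HR (Icc bR cR))
    (h0La : HL aL = 0) (h0Ra : HR aR = 0) (h0Rc : HR cR = 0)
    (hA : A ∈ Icc (max (HL bL) (HR bR)) 0)
    (GA : Set (ℝ × ℝ))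
    (hGA : GA = {k : ℝ × ℝ | k.1 ∈ Icc aL cL ∧ k.2 ∈ Icc aR cR ∧
        HR k.2 = HL k.1 ∧
        HL k.1 = max (max A (HL (max k.1 bL))) (HR (min k.2 bR))}) :
    ∀ k : ℝ × ℝ, k.1 ∈ Icc aL cL → k.2 ∈ Icc aR cR → HL k.1 = HR k.2 →
      (∀ k' ∈ GA,
        Real.sign (k.2 - k'.2) * (HR k.2 - HR k'.2) ≤
          Real.sign (k.1 - k'.1) * (HL k.1 - HL k'.1)) →
      k ∈ GA := by
  change GA = germ HL HR aL bL cL aR bR cR A at hGA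
  subst hGA
  intro k hk1 hk2 hRH hdiss
  have hLA : HL bL ≤ A := (le_max_left _ _).trans hA.1
  have hRA : HR bR ≤ A := (le_max_right _ _).trans hA.1
  obtain ⟨p, hp, hpA⟩ := intermediate_value_Icc' haL.le
    (hCL.continuousOn.mono (Icc_subset_Icc_right hbL.le)) ⟨hLA, h0La ▸ hA.2⟩
  obtain ⟨q, hq, hqA⟩ := intermediate_value_Icc hbR.le
    (hCR.continuousOn.mono (Icc_subset_Icc_left haR.le)) ⟨hRA, h0Rc ▸ hA.2⟩
  obtain ⟨q', hq', hq'A⟩ := intermediate_value_Icc' haR.le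
    (hCR.continuousOn.mono (Icc_subset_Icc_right hbR.le)) ⟨hRA, h0Ra ▸ hA.2⟩
  have hpL : p ∈ Icc aL cL := ⟨hp.1, hp.2.trans hbL.le⟩
  have hAv : A ≤ HL k.1 := by
    by_contra! hvA
    have hpk : p < k.1 := hdecL.lt_of_apply_lt_of_mem_Icc hp hk1.1 (hpA ▸ hvA)
    have hkq : k.2 < q := hincR.lt_of_apply_lt_of_mem_Icc hq hk2.2 (hqA ▸ hRH ▸ hvA)
    have := hdiss _ (mk_mem_germ_of_apply_eq hLA hRA hpL ⟨haR.le.trans hq.1, hq.2⟩ hpA hqA)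
    rw [Real.sign_of_pos (sub_pos.2 hpk), Real.sign_of_neg (sub_neg.2 hkq), hpA, hqA, ← hRH] at this
    linarith
  refine (mem_germ_iff hLA hRA).2 ⟨hk1, hk2, hRH.symm, hAv, fun hkL hkR => ?_⟩
  by_contra! hvA
  have hkp : k.1 < p := (hdecL.lt_iff_gt hp ⟨hk1.1, hkL.le⟩).1 (hpA ▸ hvA)
  have hqk : q' < k.2 := hq'.2.trans_lt hkR
  have := hdiss _ (mk_mem_germ_of_apply_eq hLA hRA hpL ⟨hq'.1, hq'.2.trans hbR.le⟩ hpA hq'A)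
  rw [Real.sign_of_neg (sub_neg.2 hkp), Real.sign_of_pos (sub_pos.2 hqk), hpA, hq'A, ← hRH] at this
  linarith

/-- The germ $\mathcal G_A$ is maximal: any pair in the box satisfying Rankine-Hugoniot and
the dissipation inequality against every element of $\mathcal G_A$ belongs to $\mathcal G_A$. -/
theorem germ_maximal
    (aL bL cL aR bR cR δ A : ℝ)
    (HL HR : ℝ → ℝ)
    (haL : aL < bL) (hbL : bL < cL) (haR : aR < bR) (hbR : bR < cR)
    (hδ : 0 < δ)
    (hCL : ContDiffOn ℝ 2 HL (Icc aL cL)) (hCR : ContDiffOn ℝ 2 HR (Icc aR cR))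
    (hconvL : ∀ x ∈ Icc aL cL, δ ≤ deriv (deriv HL) x)
    (hconvR : ∀ x ∈ Icc aR cR, δ ≤ deriv (deriv HR) x)
    (hdecL : StrictAntiOn HL (Icc aL bL)) (hincL : StrictMonoOn HL (Icc bL cL))
    (hdecR : StrictAntiOn HR (Icc aR bR)) (hincR : StrictMonoOn HR (Icc bR cR))
    (h0La : HL aL = 0) (h0Lc : HL cL = 0) (h0Ra : HR aR = 0) (h0Rc : HR cR = 0)
    (hA : A ∈ Icc (max (HL bL) (HR bR)) 0)
    (GA : Set (ℝ × ℝ))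
    (hGA : GA = {k : ℝ × ℝ | k.1 ∈ Icc aL cL ∧ k.2 ∈ Icc aR cR ∧
        HR k.2 = HL k.1 ∧
        HL k.1 = max (max A (HL (max k.1 bL))) (HR (min k.2 bR))}) :
    ∀ k : ℝ × ℝ, k.1 ∈ Icc aL cL → k.2 ∈ Icc aR cR → HL k.1 = HR k.2 →
      (∀ k' ∈ GA,
        Real.sign (k.2 - k'.2) * (HR k.2 - HR k'.2) ≤
          Real.sign (k.1 - k'.1) * (HL k.1 - HL k'.1)) →
      k ∈ GA :=
  germ_maximal_general aL bL cL aR bR cR A HL HR haL hbL haR hbR hCL hCR hdecL hincR h0La h0Ra h0Rc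
    hA GA hGA
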